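/- arXiv:1706.07640 — 3 statements merged into one kernel-verified Lean document; each statement's English description precedes it below -/
import Mathlib

section
/- Assume that every diagonal entry of B is nonzero and that every row of B̃ is nonzero. Let D be the diagonal part of B and R = B − D. Given x₁ ∈ ℝ^m and x₂ ∈ ℝ^p, define one generalized Jacobi iteration by: d ∈ ℝ^m with d_i = (b_i − B_i·x₁ − B̃_i·x₂)/(m·‖B̃_i‖₁); x₂' = x₂ + s(B̃)·d; b̂ = b − B̃·x₂'; and x₁' = D⁻¹·(−R·x₁ + b̂). Then x₁' = x₁ − D⁻¹·(I − (1/m)·B̃·s(B̃)·N(B̃)⁻¹)·(B·x₁ + B̃·x₂ − b), where I is the m×m identity matrix. -/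
/-!
Write `r = B x₁ + B̃ x₂ - b` for the residual. The step length is `d = -(1/m) N⁻¹ r`, and
`D x₁' = -R x₁ + b - B̃ x₂ - B̃ s d = D x₁ - r + (1/m) B̃ s N⁻¹ r`, since `R = B - D`.
Multiplying by `D⁻¹` gives the formula; everything except the inversion of the diagonal matrices
`D` and `N` is an identity of matrix-vector products over any commutative ring.
-/

open Matrix

namespace Matrix

variable {ι κ K : Type*} [Fintype ι] [DecidableEq ι]

theorem inv_diagonal_mulVec_of_ne_zero [Field K] {v : ι → K} (hv : ∀ i, v i ≠ 0) (r : ι → K) :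
    (diagonal v)⁻¹ *ᵥ r = fun i => r i / v i := by
  have hinv : (diagonal v)⁻¹ = diagonal fun i => (v i)⁻¹ := by
    refine inv_eq_left_inv ?_
    rw [diagonal_mul_diagonal, ← diagonal_one]
    exact congrArg diagonal (funext fun i => inv_mul_cancel₀ (hv i))
  funext i
  rw [hinv, mulVec_diagonal, div_eq_inv_mul]

variable [Fintype κ] [CommRing K]

theorem inv_mulVec_jacobi_update {D : Matrix ι ι K} (hD : IsUnit D.det) (B : Matrix ι ι K)
    (Bt : Matrix ι κ K) (s : Matrix κ ι K) (M : Matrix ι ι K) (c : K) (b x₁ : ι → K)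
    (x₂ : κ → K) :
    D⁻¹ *ᵥ (-((B - D) *ᵥ x₁) + (b - Bt *ᵥ (x₂ + s *ᵥ (-c • M *ᵥ (B *ᵥ x₁ + Bt *ᵥ x₂ - b))))) =
      x₁ - (D⁻¹ * (1 - c • (Bt * s * M))) *ᵥ (B *ᵥ x₁ + Bt *ᵥ x₂ - b) := by
  have hInner : -((B - D) *ᵥ x₁) + (b - Bt *ᵥ (x₂ + s *ᵥ (-c • M *ᵥ (B *ᵥ x₁ + Bt *ᵥ x₂ - b))))
      = D *ᵥ x₁ - (1 - c • (Bt * s * M)) *ᵥ (B *ᵥ x₁ + Bt *ᵥ x₂ - b) := by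
    simp only [sub_mulVec, one_mulVec, smul_mulVec, mulVec_add, mulVec_sub,
      mulVec_smul, ← mulVec_mulVec]
    module
  rw [hInner, mulVec_sub, mulVec_mulVec, mulVec_mulVec, nonsing_inv_mul D hD, one_mulVec]

end Matrix

theorem sum_abs_pos_of_ne_zero {κ : Type*} [Fintype κ] {v : κ → ℝ} (hv : v ≠ 0) :
    0 < ∑ j, |v j| := by
  obtain ⟨j, hj⟩ := Function.ne_iff.mp hv
  exact Finset.sum_pos' (fun j _ => abs_nonneg _) ⟨j, Finset.mem_univ j, abs_pos.mpr hj⟩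

theorem generalized_jacobi_step_formula_general
    (m p : ℕ)
    (B : Matrix (Fin m) (Fin m) ℝ) (Bt : Matrix (Fin m) (Fin p) ℝ) (b : Fin m → ℝ)
    (hDiag : ∀ i, B i i ≠ 0) (hRows : ∀ i, Bt i ≠ 0)
    (s : Matrix (Fin p) (Fin m) ℝ)
    (N : Matrix (Fin m) (Fin m) ℝ)
    (hN : N = Matrix.diagonal (fun i => ∑ j, |Bt i j|))
    (D : Matrix (Fin m) (Fin m) ℝ) (hD : D = Matrix.diagonal (fun i => B i i))
    (R : Matrix (Fin m) (Fin m) ℝ) (hR : R = B - D)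
    (x₁ : Fin m → ℝ) (x₂ : Fin p → ℝ)
    (d : Fin m → ℝ)
    (hd : ∀ i, d i = (b i - (B.mulVec x₁) i - (Bt.mulVec x₂) i) /
      ((m : ℝ) * ∑ j, |Bt i j|))
    (x₂' : Fin p → ℝ) (hx₂' : x₂' = x₂ + s.mulVec d)
    (bhat : Fin m → ℝ) (hbhat : bhat = b - Bt.mulVec x₂')
    (x₁' : Fin m → ℝ) (hx₁' : x₁' = D⁻¹.mulVec (-(R.mulVec x₁) + bhat)) :
    x₁' = x₁ - (D⁻¹ * (1 - (1 / (m : ℝ)) • (Bt * s * N⁻¹))).mulVec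
      (B.mulVec x₁ + Bt.mulVec x₂ - b) := by
  have hDet : IsUnit D.det := by
    rw [hD, det_diagonal]
    exact isUnit_iff_ne_zero.mpr (Finset.prod_ne_zero_iff.mpr fun i _ => hDiag i)
  have hStep : d = -(1 / (m : ℝ)) • N⁻¹ *ᵥ (B *ᵥ x₁ + Bt *ᵥ x₂ - b) := by
    rw [hN, inv_diagonal_mulVec_of_ne_zero fun i => (sum_abs_pos_of_ne_zero (hRows i)).ne']
    funext i
    rw [hd i]
    simp only [Pi.smul_apply, Pi.add_apply, Pi.sub_apply, smul_eq_mul]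
    ring
  rw [hx₁', hbhat, hx₂', hR, hStep]
  exact inv_mulVec_jacobi_update hDet B Bt s N⁻¹ _ b x₁ x₂

/-- one generalized Jacobi iteration satisfies
`x₁' = x₁ − D⁻¹ (I − (1/m) B̃ s(B̃) N(B̃)⁻¹) (B x₁ + B̃ x₂ − b)`. -/
theorem generalized_jacobi_step_formula
    (m p : ℕ) (hm : 0 < m) (hp : 0 < p)
    (B : Matrix (Fin m) (Fin m) ℝ) (Bt : Matrix (Fin m) (Fin p) ℝ) (b : Fin m → ℝ)
    (hDiag : ∀ i, B i i ≠ 0) (hRows : ∀ i, Bt i ≠ 0)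
    (s : Matrix (Fin p) (Fin m) ℝ) (hs : ∀ j i, s j i = Real.sign (Bt i j))
    (N : Matrix (Fin m) (Fin m) ℝ)
    (hN : N = Matrix.diagonal (fun i => ∑ j, |Bt i j|))
    (D : Matrix (Fin m) (Fin m) ℝ) (hD : D = Matrix.diagonal (fun i => B i i))
    (R : Matrix (Fin m) (Fin m) ℝ) (hR : R = B - D)
    (x₁ : Fin m → ℝ) (x₂ : Fin p → ℝ)
    (d : Fin m → ℝ)
    (hd : ∀ i, d i = (b i - (B.mulVec x₁) i - (Bt.mulVec x₂) i) /
      ((m : ℝ) * ∑ j, |Bt i j|))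
    (x₂' : Fin p → ℝ) (hx₂' : x₂' = x₂ + s.mulVec d)
    (bhat : Fin m → ℝ) (hbhat : bhat = b - Bt.mulVec x₂')
    (x₁' : Fin m → ℝ) (hx₁' : x₁' = D⁻¹.mulVec (-(R.mulVec x₁) + bhat)) :
    x₁' = x₁ - (D⁻¹ * (1 - (1 / (m : ℝ)) • (Bt * s * N⁻¹))).mulVec
      (B.mulVec x₁ + Bt.mulVec x₂ - b) :=
  generalized_jacobi_step_formula_general m p B Bt b hDiag hRows s N hN D hD R hR x₁ x₂ d hd x₂'
    hx₂' bhat hbhat x₁' hx₁'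
end

section
/- Assume that every diagonal entry of B is nonzero and that every row of B̃ is nonzero. Let L be the lower-triangular part of B (L_{ij} = B_{ij} if j ≤ i and L_{ij} = 0 otherwise) and R = B − L. Given x₁ ∈ ℝ^m and x₂ ∈ ℝ^p, define one generalized Gauss–Seidel iteration by: d ∈ ℝ^m with d_i = (b_i − B_i·x₁ − B̃_i·x₂)/(m·‖B̃_i‖₁); x₂' = x₂ + s(B̃)·d; b̂ = b − B̃·x₂'; and x₁' = L⁻¹·(−R·x₁ + b̂). Then the new residual satisfies (B·x₁' + B̃·x₂' − b) = (I − B·L⁻¹)·(I − (1/m)·B̃·s(B̃)·N(B̃)⁻¹)·(B·x₁ + B̃·x₂ − b), where I is the m×m identity matrix. -/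
/-!
Both half-steps act on the residual `r = B x₁ + B̃ x₂ - b` by a fixed matrix. The `x₂`-update
adds `B̃ s d = -(1/m) B̃ s N⁻¹ r` to it. The `x₁`-update is the splitting step
`L x₁' = (L - B) x₁ + b̂` for the system `B x₁ = b̂`, which multiplies the residual `B x₁ - b̂`
(the residual after the first half-step) by `I - B L⁻¹`.
-/

open Matrix

namespace Matrix

variable {n K : Type*} [Fintype n] [DecidableEq n]

theorem isUnit_det_of_isLowerTriangular [LinearOrder n] [Field K] {A : Matrix n n K}
    (hA : A.IsLowerTriangular) (hdiag : ∀ i, A i i ≠ 0) : IsUnit A.det := by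
  rw [det_of_isLowerTriangular A hA]
  exact (Finset.prod_ne_zero_iff.mpr fun i _ => hdiag i).isUnit

theorem inv_diagonal_of_ne_zero [Field K] {v : n → K} (hv : ∀ i, v i ≠ 0) :
    (diagonal v)⁻¹ = diagonal v⁻¹ := by
  refine inv_eq_right_inv ?_
  rw [diagonal_mul_diagonal, ← diagonal_one]
  exact congrArg diagonal (funext fun i => mul_inv_cancel₀ (hv i))

theorem mulVec_splitting_step_sub [CommRing K] (B L : Matrix n n K) (hL : IsUnit L.det)
    (x c : n → K) :
    B *ᵥ (L⁻¹ *ᵥ (-((B - L) *ᵥ x) + c)) - c = (1 - B * L⁻¹) *ᵥ (B *ᵥ x - c) := by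
  have hstep : -((B - L) *ᵥ x) + c = L *ᵥ x - (B *ᵥ x - c) := by
    rw [sub_mulVec]; abel
  rw [hstep, mulVec_sub, mulVec_mulVec, nonsing_inv_mul L hL, one_mulVec, mulVec_sub,
    mulVec_mulVec, sub_mulVec, one_mulVec]
  abel

end Matrix

theorem sum_abs_ne_zero {ι : Type*} [Fintype ι] {v : ι → ℝ} (hv : v ≠ 0) : ∑ j, |v j| ≠ 0 := by
  obtain ⟨j, hj⟩ := Function.ne_iff.mp hv
  exact (Finset.sum_pos' (fun j _ => abs_nonneg (v j)) ⟨j, Finset.mem_univ j, abs_pos.mpr hj⟩).ne'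

theorem generalized_gauss_seidel_residual_formula_general
    (m p : ℕ)
    (B : Matrix (Fin m) (Fin m) ℝ) (Bt : Matrix (Fin m) (Fin p) ℝ) (b : Fin m → ℝ)
    (hDiag : ∀ i, B i i ≠ 0) (hRows : ∀ i, Bt i ≠ 0)
    (s : Matrix (Fin p) (Fin m) ℝ)
    (N : Matrix (Fin m) (Fin m) ℝ)
    (hN : N = Matrix.diagonal (fun i => ∑ j, |Bt i j|))
    (L : Matrix (Fin m) (Fin m) ℝ) (hL : ∀ i j, L i j = if (j : ℕ) ≤ (i : ℕ) then B i j else 0)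
    (R : Matrix (Fin m) (Fin m) ℝ) (hR : R = B - L)
    (x₁ : Fin m → ℝ) (x₂ : Fin p → ℝ)
    (d : Fin m → ℝ)
    (hd : ∀ i, d i = (b i - (B.mulVec x₁) i - (Bt.mulVec x₂) i) /
      ((m : ℝ) * ∑ j, |Bt i j|))
    (x₂' : Fin p → ℝ) (hx₂' : x₂' = x₂ + s.mulVec d)
    (bhat : Fin m → ℝ) (hbhat : bhat = b - Bt.mulVec x₂')
    (x₁' : Fin m → ℝ) (hx₁' : x₁' = L⁻¹.mulVec (-(R.mulVec x₁) + bhat)) :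
    B.mulVec x₁' + Bt.mulVec x₂' - b =
      ((1 - B * L⁻¹) * (1 - (1 / (m : ℝ)) • (Bt * s * N⁻¹))).mulVec
        (B.mulVec x₁ + Bt.mulVec x₂ - b) := by
  set r := B *ᵥ x₁ + Bt *ᵥ x₂ - b with hr
  have hNinv : N⁻¹ = diagonal fun i => (∑ j, |Bt i j|)⁻¹ :=
    hN ▸ inv_diagonal_of_ne_zero fun i => sum_abs_ne_zero (hRows i)
  have hLower : L.IsLowerTriangular := fun i j hij => by
    rw [hL, if_neg (not_le.mpr (Fin.lt_def.mp (OrderDual.toDual_lt_toDual.mp hij)))]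
  have hLdiag : ∀ i, L i i ≠ 0 := fun i => by rw [hL, if_pos le_rfl]; exact hDiag i
  have hd' : d = -((1 / (m : ℝ)) • (N⁻¹ *ᵥ r)) := funext fun i => by
    rw [hd, hNinv, Pi.neg_apply, Pi.smul_apply, mulVec_diagonal]
    simp only [hr, Pi.add_apply, Pi.sub_apply, smul_eq_mul]
    rw [div_eq_mul_inv, mul_inv]
    ring
  have hx₂_step : B *ᵥ x₁ + Bt *ᵥ x₂' - b = (1 - (1 / (m : ℝ)) • (Bt * s * N⁻¹)) *ᵥ r := by
    simp only [hx₂', hd', mulVec_add, mulVec_neg, mulVec_smul, mulVec_mulVec, sub_mulVec,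
      one_mulVec, smul_mulVec, Matrix.mul_assoc, hr]
    abel
  calc B *ᵥ x₁' + Bt *ᵥ x₂' - b = B *ᵥ x₁' - bhat := by rw [hbhat]; abel
    _ = (1 - B * L⁻¹) *ᵥ (B *ᵥ x₁ - bhat) := by
      rw [hx₁', hR]
      exact mulVec_splitting_step_sub B L (isUnit_det_of_isLowerTriangular hLower hLdiag) x₁ bhat
    _ = _ := by rw [← mulVec_mulVec, ← hx₂_step, hbhat]; congr 1; abel

/-- one generalized Gauss–Seidel iteration maps the residual by
`(B x₁' + B̃ x₂' − b) = (I − B L⁻¹)(I − (1/m) B̃ s(B̃) N(B̃)⁻¹)(B x₁ + B̃ x₂ − b)`. -/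
theorem generalized_gauss_seidel_residual_formula
    (m p : ℕ) (hm : 0 < m) (hp : 0 < p)
    (B : Matrix (Fin m) (Fin m) ℝ) (Bt : Matrix (Fin m) (Fin p) ℝ) (b : Fin m → ℝ)
    (hDiag : ∀ i, B i i ≠ 0) (hRows : ∀ i, Bt i ≠ 0)
    (s : Matrix (Fin p) (Fin m) ℝ) (hs : ∀ j i, s j i = Real.sign (Bt i j))
    (N : Matrix (Fin m) (Fin m) ℝ)
    (hN : N = Matrix.diagonal (fun i => ∑ j, |Bt i j|))
    (L : Matrix (Fin m) (Fin m) ℝ) (hL : ∀ i j, L i j = if (j : ℕ) ≤ (i : ℕ) then B i j else 0)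
    (R : Matrix (Fin m) (Fin m) ℝ) (hR : R = B - L)
    (x₁ : Fin m → ℝ) (x₂ : Fin p → ℝ)
    (d : Fin m → ℝ)
    (hd : ∀ i, d i = (b i - (B.mulVec x₁) i - (Bt.mulVec x₂) i) /
      ((m : ℝ) * ∑ j, |Bt i j|))
    (x₂' : Fin p → ℝ) (hx₂' : x₂' = x₂ + s.mulVec d)
    (bhat : Fin m → ℝ) (hbhat : bhat = b - Bt.mulVec x₂')
    (x₁' : Fin m → ℝ) (hx₁' : x₁' = L⁻¹.mulVec (-(R.mulVec x₁) + bhat)) :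
    B.mulVec x₁' + Bt.mulVec x₂' - b =
      ((1 - B * L⁻¹) * (1 - (1 / (m : ℝ)) • (Bt * s * N⁻¹))).mulVec
        (B.mulVec x₁ + Bt.mulVec x₂ - b) :=
  generalized_gauss_seidel_residual_formula_general m p B Bt b hDiag hRows s N hN L hL R hR x₁ x₂ d
    hd x₂' hx₂' bhat hbhat x₁' hx₁'
end

section
/- Assume that every diagonal entry of B is nonzero and that every row of B̃ is nonzero. Let D be the diagonal part of B and R = B − D. Given x₁ ∈ ℝ^m and x₂ ∈ ℝ^p, define one generalized Jacobi iteration by: d ∈ ℝ^m with d_i = (b_i − B_i·x₁ − B̃_i·x₂)/(m·‖B̃_i‖₁); x₂' = x₂ + s(B̃)·d; b̂ = b − B̃·x₂'; and x₁' = D⁻¹·(−R·x₁ + b̂). Then ‖x₁' − x₁‖₁ + ‖x₂' − x₂‖₁ ≤ ( ‖D⁻¹·(I − (1/m)·B̃·s(B̃)·N(B̃)⁻¹)‖₁ + (1/m)·‖s(B̃)·N(B̃)⁻¹‖₁ ) · ‖B·x₁ + B̃·x₂ − b‖₁, where ‖·‖₁ on vectors is the ℓ1-norm and ‖·‖₁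 on matrices is the ℓ1 operator norm. -/
/-
Writing `r = B x₁ + B̃ x₂ − b` for the residual, the step direction is `d = −(1/m) N⁻¹ r`, so
`x₂' − x₂ = −(1/m) s N⁻¹ r`. The Jacobi half-step gives `x₁' − x₁ = D⁻¹ (b − B x₁ − B̃ x₂')`, and
substituting `x₂'` turns this into `x₁' − x₁ = D⁻¹ (I − (1/m) B̃ s N⁻¹) (−r)`. Both increments are
thus fixed matrices applied to multiples of `r`, and the bound is the operator-norm inequality
applied to each.
-/

/-- The ℓ1-norm of a vector: sum of absolute values of its entries. -/
noncomputable def vecL1 {n : ℕ} (v : Fin n → ℝ) : ℝ := ∑ i, |v i|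

/-- The ℓ1 operator norm of a matrix: the maximum absolute column sum. -/
noncomputable def matL1 {a c : ℕ} (M : Matrix (Fin a) (Fin c) ℝ) : ℝ :=
  ⨆ j, ∑ i, |M i j|

open Matrix

section L1

variable {n : ℕ}

lemma vecL1_neg (v : Fin n → ℝ) : vecL1 (-v) = vecL1 v := by
  simp [vecL1]

lemma vecL1_smul (c : ℝ) (v : Fin n → ℝ) : vecL1 (c • v) = |c| * vecL1 v := by
  simp [vecL1, abs_mul, Finset.mul_sum]

lemma vecL1_ne_zero {v : Fin n → ℝ} (hv : v ≠ 0) : vecL1 v ≠ 0 := by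
  obtain ⟨i, hi⟩ := Function.ne_iff.mp hv
  exact (Finset.sum_pos' (fun _ _ => abs_nonneg _) ⟨i, Finset.mem_univ i, abs_pos.mpr hi⟩).ne'

lemma sum_abs_le_matL1 {a c : ℕ} (M : Matrix (Fin a) (Fin c) ℝ) (j : Fin c) :
    ∑ i, |M i j| ≤ matL1 M :=
  le_ciSup (Set.finite_range fun j => ∑ i, |M i j|).bddAbove j

lemma vecL1_mulVec_le {a c : ℕ} (M : Matrix (Fin a) (Fin c) ℝ) (v : Fin c → ℝ) :
    vecL1 (M *ᵥ v) ≤ matL1 M * vecL1 v :=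
  calc vecL1 (M *ᵥ v) ≤ ∑ i, ∑ j, |M i j| * |v j| :=
        Finset.sum_le_sum fun i _ => by
          simpa only [mulVec, dotProduct, abs_mul] using
            Finset.abs_sum_le_sum_abs (fun j => M i j * v j) Finset.univ
    _ = ∑ j, (∑ i, |M i j|) * |v j| := by rw [Finset.sum_comm]; simp only [Finset.sum_mul]
    _ ≤ ∑ j, matL1 M * |v j| :=
        Finset.sum_le_sum fun j _ => by gcongr; exact sum_abs_le_matL1 M j
    _ = matL1 M * vecL1 v := by rw [vecL1, Finset.mul_sum]

end L1

lemma Matrix.inv_diagonal_of_ne_zero_s4 {n K : Type*} [Fintype n] [DecidableEq n] [Field K]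
    {v : n → K} (hv : ∀ i, v i ≠ 0) : (diagonal v)⁻¹ = diagonal fun i => (v i)⁻¹ :=
  inv_eq_right_inv <| by simp [diagonal_mul_diagonal, hv]

lemma jacobi_update_sub {m p : ℕ} {B D Dinv : Matrix (Fin m) (Fin m) ℝ}
    {Bt : Matrix (Fin m) (Fin p) ℝ} (hD : Dinv * D = 1) (b x₁ : Fin m → ℝ) (x₂ : Fin p → ℝ) :
    Dinv *ᵥ (-((B - D) *ᵥ x₁) + (b - Bt *ᵥ x₂)) - x₁ = Dinv *ᵥ (b - B *ᵥ x₁ - Bt *ᵥ x₂) := by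
  have hx₁ : Dinv *ᵥ (D *ᵥ x₁) = x₁ := by rw [mulVec_mulVec, hD, one_mulVec]
  calc _ = Dinv *ᵥ (-((B - D) *ᵥ x₁) + (b - Bt *ᵥ x₂)) - Dinv *ᵥ (D *ᵥ x₁) := by rw [hx₁]
    _ = _ := by rw [← mulVec_sub, sub_mulVec]; congr 1; abel

theorem generalized_jacobi_step_bound_general
    (m p : ℕ)
    (B : Matrix (Fin m) (Fin m) ℝ) (Bt : Matrix (Fin m) (Fin p) ℝ) (b : Fin m → ℝ)
    (hDiag : ∀ i, B i i ≠ 0) (hRows : ∀ i, Bt i ≠ 0)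
    (s : Matrix (Fin p) (Fin m) ℝ)
    (N : Matrix (Fin m) (Fin m) ℝ)
    (hN : N = Matrix.diagonal (fun i => ∑ j, |Bt i j|))
    (D : Matrix (Fin m) (Fin m) ℝ) (hD : D = Matrix.diagonal (fun i => B i i))
    (R : Matrix (Fin m) (Fin m) ℝ) (hR : R = B - D)
    (x₁ : Fin m → ℝ) (x₂ : Fin p → ℝ)
    (d : Fin m → ℝ)
    (hd : ∀ i, d i = (b i - (B.mulVec x₁) i - (Bt.mulVec x₂) i) /
      ((m : ℝ) * ∑ j, |Bt i j|))
    (x₂' : Fin p → ℝ) (hx₂' : x₂' = x₂ + s.mulVec d)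
    (bhat : Fin m → ℝ) (hbhat : bhat = b - Bt.mulVec x₂')
    (x₁' : Fin m → ℝ) (hx₁' : x₁' = D⁻¹.mulVec (-(R.mulVec x₁) + bhat)) :
    vecL1 (x₁' - x₁) + vecL1 (x₂' - x₂) ≤
      (matL1 (D⁻¹ * (1 - (1 / (m : ℝ)) • (Bt * s * N⁻¹))) +
        (1 / (m : ℝ)) * matL1 (s * N⁻¹)) *
      vecL1 (B.mulVec x₁ + Bt.mulVec x₂ - b) := by
  set r := B *ᵥ x₁ + Bt *ᵥ x₂ - b
  have hd_eq : d = N⁻¹ *ᵥ (-(1 / (m : ℝ)) • r) := by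
    have hNrow : ∀ i, ∑ j, |Bt i j| ≠ 0 := fun i => vecL1_ne_zero (hRows i)
    ext i
    rw [hN, inv_diagonal_of_ne_zero_s4 hNrow, mulVec_diagonal, hd i]
    simp only [r, Pi.smul_apply, Pi.sub_apply, Pi.add_apply, smul_eq_mul]
    ring
  have hx₂_sub : x₂' - x₂ = (s * N⁻¹) *ᵥ (-(1 / (m : ℝ)) • r) := by
    rw [hx₂', hd_eq, mulVec_mulVec, add_sub_cancel_left]
  have hx₁_sub : x₁' - x₁ = (D⁻¹ * (1 - (1 / (m : ℝ)) • (Bt * s * N⁻¹))) *ᵥ (-r) := by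
    have hDinv : D⁻¹ * D = 1 := by
      rw [hD, inv_diagonal_of_ne_zero_s4 hDiag, diagonal_mul_diagonal]; simp [hDiag]
    rw [hx₁', hR, hbhat, jacobi_update_sub hDinv, hx₂', mulVec_add, hd_eq, ← mulVec_mulVec,
      mulVec_mulVec, mulVec_mulVec, sub_mulVec, smul_mulVec, one_mulVec, mulVec_smul,
      mulVec_neg]
    congr 1
    simp only [r]
    module
  have hm_inv : |-(1 / (m : ℝ))| = 1 / m := by rw [abs_neg, abs_of_nonneg (by positivity)]
  calc vecL1 (x₁' - x₁) + vecL1 (x₂' - x₂)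
      ≤ matL1 (D⁻¹ * (1 - (1 / (m : ℝ)) • (Bt * s * N⁻¹))) * vecL1 (-r)
        + matL1 (s * N⁻¹) * vecL1 (-(1 / (m : ℝ)) • r) := by
        rw [hx₁_sub, hx₂_sub]; exact add_le_add (vecL1_mulVec_le _ _) (vecL1_mulVec_le _ _)
    _ = _ := by rw [vecL1_neg, vecL1_smul, hm_inv]; ring

/-- the generalized Jacobi step satisfies
`‖x₁' − x₁‖₁ + ‖x₂' − x₂‖₁ ≤ (‖D⁻¹(I − (1/m) B̃ s N⁻¹)‖₁ + (1/m)‖s N⁻¹‖₁) ‖B x₁ + B̃ x₂ − b‖₁`. -/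
theorem generalized_jacobi_step_bound
    (m p : ℕ) (hm : 0 < m) (hp : 0 < p)
    (B : Matrix (Fin m) (Fin m) ℝ) (Bt : Matrix (Fin m) (Fin p) ℝ) (b : Fin m → ℝ)
    (hDiag : ∀ i, B i i ≠ 0) (hRows : ∀ i, Bt i ≠ 0)
    (s : Matrix (Fin p) (Fin m) ℝ) (hs : ∀ j i, s j i = Real.sign (Bt i j))
    (N : Matrix (Fin m) (Fin m) ℝ)
    (hN : N = Matrix.diagonal (fun i => ∑ j, |Bt i j|))
    (D : Matrix (Fin m) (Fin m) ℝ) (hD : D = Matrix.diagonal (fun i => B i i))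
    (R : Matrix (Fin m) (Fin m) ℝ) (hR : R = B - D)
    (x₁ : Fin m → ℝ) (x₂ : Fin p → ℝ)
    (d : Fin m → ℝ)
    (hd : ∀ i, d i = (b i - (B.mulVec x₁) i - (Bt.mulVec x₂) i) /
      ((m : ℝ) * ∑ j, |Bt i j|))
    (x₂' : Fin p → ℝ) (hx₂' : x₂' = x₂ + s.mulVec d)
    (bhat : Fin m → ℝ) (hbhat : bhat = b - Bt.mulVec x₂')
    (x₁' : Fin m → ℝ) (hx₁' : x₁' = D⁻¹.mulVec (-(R.mulVec x₁) + bhat)) :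
    vecL1 (x₁' - x₁) + vecL1 (x₂' - x₂) ≤
      (matL1 (D⁻¹ * (1 - (1 / (m : ℝ)) • (Bt * s * N⁻¹))) +
        (1 / (m : ℝ)) * matL1 (s * N⁻¹)) *
      vecL1 (B.mulVec x₁ + Bt.mulVec x₂ - b) :=
  generalized_jacobi_step_bound_general m p B Bt b hDiag hRows s N hN D hD R hR x₁ x₂ d hd x₂' hx₂'
    bhat hbhat x₁' hx₁'
end
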